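/- Let y ≥ b*_{r+q}. Then the following are equivalent: (i) y ≥ y_u; (ii) μ − (r+q)·V_{r+q}(x) ≤ 0 for all x ∈ (b*_{r+q}, y) and μ − r·V_{r+q}(x) ≤ 0 for all x ≥ y. In particular, if y < y_u then μ − r·V_{r+q}(y) = μ − r·(y − b*_{r+q} + μ/(r+q)) > 0. -/

import Mathlib

open Real Set Filter

noncomputable def gam1 (μ σ ρ : ℝ) : ℝ := Real.sqrt (μ^2/σ^4 + 2*ρ/σ^2) - μ/σ^2

noncomputable def gam2 (μ σ ρ : ℝ) : ℝ := -Real.sqrt (μ^2/σ^4 + 2*ρ/σ^2) - μ/σ^2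

/-- The classical optimal dividend boundary `b*_ρ`. -/
noncomputable def bstar (μ σ ρ : ℝ) : ℝ :=
  Real.log ((gam2 μ σ ρ)^2 / (gam1 μ σ ρ)^2) / (gam1 μ σ ρ - gam2 μ σ ρ)

/-- The classical value function `V_ρ`. -/
noncomputable def Vfun (μ σ ρ x : ℝ) : ℝ :=
  if x < bstar μ σ ρ then
    (Real.exp (gam1 μ σ ρ * x) - Real.exp (gam2 μ σ ρ * x)) /
      (gam1 μ σ ρ * Real.exp (gam1 μ σ ρ * bstar μ σ ρ) -
        gam2 μ σ ρ * Real.exp (gam2 μ σ ρ * bstar μ σ ρ))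
  else
    (Real.exp (gam1 μ σ ρ * bstar μ σ ρ) - Real.exp (gam2 μ σ ρ * bstar μ σ ρ)) /
      (gam1 μ σ ρ * Real.exp (gam1 μ σ ρ * bstar μ σ ρ) -
        gam2 μ σ ρ * Real.exp (gam2 μ σ ρ * bstar μ σ ρ)) + x - bstar μ σ ρ

/-- `δ(y) = e^{γ₁(r+q)y} − e^{γ₂(r+q)y}`. -/
noncomputable def del (μ σ r q y : ℝ) : ℝ :=
  Real.exp (gam1 μ σ (r+q) * y) - Real.exp (gam2 μ σ (r+q) * y)

/-- `δ'(y)`. -/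
noncomputable def delP (μ σ r q y : ℝ) : ℝ :=
  gam1 μ σ (r+q) * Real.exp (gam1 μ σ (r+q) * y) -
    gam2 μ σ (r+q) * Real.exp (gam2 μ σ (r+q) * y)

/-- `δ''(y)`. -/
noncomputable def delPP (μ σ r q y : ℝ) : ℝ :=
  (gam1 μ σ (r+q))^2 * Real.exp (gam1 μ σ (r+q) * y) -
    (gam2 μ σ (r+q))^2 * Real.exp (gam2 μ σ (r+q) * y)

/-- `y_u := b*_{r+q} + μ/r − μ/(r+q)`. -/
noncomputable def yUpper (μ σ r q : ℝ) : ℝ := bstar μ σ (r+q) + μ/r - μ/(r+q)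

/-- `Δ(y)`. -/
noncomputable def DeltaF (μ σ r q y : ℝ) : ℝ :=
  (1/(gam1 μ σ r - gam2 μ σ r)) *
    Real.log ((gam2 μ σ r)^2 * (delP μ σ r q y - gam1 μ σ r * del μ σ r q y) /
      ((gam1 μ σ r)^2 * (delP μ σ r q y - gam2 μ σ r * del μ σ r q y)))

/-- `b*(y) = y + Δ(y)`. -/
noncomputable def bstarY (μ σ r q y : ℝ) : ℝ := y + DeltaF μ σ r q y

noncomputable def psiF (μ σ ρ x : ℝ) : ℝ := Real.exp (gam1 μ σ ρ * x)
noncomputable def phiF (μ σ ρ x : ℝ) : ℝ := Real.exp (gam2 μ σ ρ * x)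
noncomputable def psiP (μ σ ρ x : ℝ) : ℝ := gam1 μ σ ρ * Real.exp (gam1 μ σ ρ * x)
noncomputable def phiP (μ σ ρ x : ℝ) : ℝ := gam2 μ σ ρ * Real.exp (gam2 μ σ ρ * x)

/-- `η(y;b) = ψ'_r(b)φ_r(y) − φ'_r(b)ψ_r(y)`. -/
noncomputable def etaF (μ σ r y b : ℝ) : ℝ :=
  psiP μ σ r b * phiF μ σ r y - phiP μ σ r b * psiF μ σ r y

/-- `η'(y;b)` (derivative in `y`). -/
noncomputable def etaP (μ σ r y b : ℝ) : ℝ :=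
  psiP μ σ r b * phiP μ σ r y - phiP μ σ r b * psiP μ σ r y

/-- `K₁(y)`. -/
noncomputable def K1 (μ σ r q y : ℝ) : ℝ :=
  (psiF μ σ r y * etaP μ σ r y (bstarY μ σ r q y) -
    psiP μ σ r y * etaF μ σ r y (bstarY μ σ r q y)) /
  (psiP μ σ r (bstarY μ σ r q y) *
    (del μ σ r q y * etaP μ σ r y (bstarY μ σ r q y) -
      delP μ σ r q y * etaF μ σ r y (bstarY μ σ r q y)))

/-- `K₂(y) = −K₁(y)`. -/
noncomputable def K2 (μ σ r q y : ℝ) : ℝ := -K1 μ σ r q y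

/-- `K₃(y)`. -/
noncomputable def K3 (μ σ r q y : ℝ) : ℝ :=
  (phiP μ σ r (bstarY μ σ r q y) *
      (del μ σ r q y * psiP μ σ r y - delP μ σ r q y * psiF μ σ r y) +
    del μ σ r q y * etaP μ σ r y (bstarY μ σ r q y) -
      delP μ σ r q y * etaF μ σ r y (bstarY μ σ r q y)) /
  (psiP μ σ r (bstarY μ σ r q y) *
    (del μ σ r q y * etaP μ σ r y (bstarY μ σ r q y) -
      delP μ σ r q y * etaF μ σ r y (bstarY μ σ r q y)))

/-- `K₄(y)`. -/
noncomputable def K4 (μ σ r q y : ℝ) : ℝ :=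
  (psiF μ σ r y * delP μ σ r q y - psiP μ σ r y * del μ σ r q y) /
  (del μ σ r q y * etaP μ σ r y (bstarY μ σ r q y) -
    delP μ σ r q y * etaF μ σ r y (bstarY μ σ r q y))

/-- The candidate value function `w(·;y)` in the subcritical regime. -/
noncomputable def wfun (μ σ r q y x : ℝ) : ℝ :=
  if x < y then
    K1 μ σ r q y * Real.exp (gam1 μ σ (r+q) * x) + K2 μ σ r q y * Real.exp (gam2 μ σ (r+q) * x)
  else if x < bstarY μ σ r q y then
    K3 μ σ r q y * Real.exp (gam1 μ σ r * x) + K4 μ σ r q y * Real.exp (gam2 μ σ r * x)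
  else
    K3 μ σ r q y * Real.exp (gam1 μ σ r * bstarY μ σ r q y) +
      K4 μ σ r q y * Real.exp (gam2 μ σ r * bstarY μ σ r q y) + x - bstarY μ σ r q y

/-- The function `f` characterising the critical level `y_l`. -/
noncomputable def fF (μ σ r q y : ℝ) : ℝ :=
  (-(gam1 μ σ r / gam2 μ σ r) * delP μ σ r q y + gam1 μ σ r * del μ σ r q y) *
    ((gam2 μ σ r)^2/(gam1 μ σ r)^2 *
      ((delP μ σ r q y - gam1 μ σ r * del μ σ r q y) /
        (delP μ σ r q y - gam2 μ σ r * del μ σ r q y)))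
      ^ (gam1 μ σ r / (gam1 μ σ r - gam2 μ σ r))
  - delP μ σ r q (bstar μ σ (r+q))

noncomputable def e1F (μ σ r q b : ℝ) : ℝ :=
  (phiF μ σ (r+q) b - phiP μ σ (r+q) b * Vfun μ σ (r+q) b) /
  (psiP μ σ (r+q) b * phiF μ σ (r+q) b - psiF μ σ (r+q) b * phiP μ σ (r+q) b)

noncomputable def e2F (μ σ r q b : ℝ) : ℝ :=
  (psiP μ σ (r+q) b * Vfun μ σ (r+q) b - psiF μ σ (r+q) b) /
  (psiP μ σ (r+q) b * phiF μ σ (r+q) b - psiF μ σ (r+q) b * phiP μ σ (r+q) b)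

noncomputable def e3F (μ σ r q b y : ℝ) : ℝ :=
  (e1F μ σ r q b * (phiF μ σ r y * psiP μ σ (r+q) y - phiP μ σ r y * psiF μ σ (r+q) y) +
    e2F μ σ r q b * (phiF μ σ r y * phiP μ σ (r+q) y - phiP μ σ r y * phiF μ σ (r+q) y)) /
  (psiP μ σ r y * phiF μ σ r y - psiF μ σ r y * phiP μ σ r y)

noncomputable def e4F (μ σ r q b y : ℝ) : ℝ :=
  (e1F μ σ r q b * (psiP μ σ r y * psiF μ σ (r+q) y - psiF μ σ r y * psiP μ σ (r+q) y) +
    e2F μ σ r q b * (psiP μ σ r y * phiF μ σ (r+q) y - psiF μ σ r y * phiP μ σ (r+q) y)) /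
  (psiP μ σ r y * phiF μ σ r y - psiF μ σ r y * phiP μ σ r y)

/-- The function `H(b,y)` from the critical regime. -/
noncomputable def Hfun (μ σ r q b y : ℝ) : ℝ :=
  (gam1 μ σ r - gam2 μ σ r) *
    (-gam2 μ σ r / gam1 μ σ r) ^ ((gam1 μ σ r + gam2 μ σ r)/(gam1 μ σ r - gam2 μ σ r)) *
    (e3F μ σ r q b y) ^ (-gam2 μ σ r/(gam1 μ σ r - gam2 μ σ r)) *
    (-e4F μ σ r q b y) ^ (gam1 μ σ r/(gam1 μ σ r - gam2 μ σ r))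

/-- `Λ(b,y) = −e₄(b,y)/e₃(b,y)`. -/
noncomputable def Lamfun (μ σ r q b y : ℝ) : ℝ := -e4F μ σ r q b y / e3F μ σ r q b y

/-- `L(y)`. -/
noncomputable def Lfun (μ σ r q y : ℝ) : ℝ :=
  (1/(gam1 μ σ r - gam2 μ σ r)) *
    Real.log ((gam2 μ σ r)^2/(gam1 μ σ r)^2 * Lamfun μ σ r q y y) - y

/-! On `[b*_ρ, ∞)` the value function `V_ρ` is affine with slope one, and its value at `b*_ρ`
is `μ/ρ`: the choice of `b*_ρ` makes `V_ρ'' (b*_ρ) = 0` (smooth fit), so the ODE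
`σ²/2 V'' + μ V' − ρ V = 0` at `b*_ρ`, where `V' = 1`, reads `μ − ρ V = 0`. Hence for `x ≥ b*_{r+q}`
we get `μ − (r+q) V_{r+q}(x) = −(r+q)(x − b*_{r+q})` and `μ − r V_{r+q}(x) ≤ 0 ↔ x ≥ y_u`. -/

section ValueFunction

variable {μ σ ρ : ℝ}

lemma sq_div_lt_discriminant (hσ : σ ≠ 0) (hρ : 0 < ρ) :
    (μ / σ ^ 2) ^ 2 < μ ^ 2 / σ ^ 4 + 2 * ρ / σ ^ 2 := by
  have : 0 < 2 * ρ / σ ^ 2 := by positivity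
  rw [div_pow, ← pow_mul]
  linarith

lemma gam1_pos (hσ : σ ≠ 0) (hρ : 0 < ρ) : 0 < gam1 μ σ ρ := by
  have := Real.lt_sqrt_of_sq_lt (sq_div_lt_discriminant (μ := μ) hσ hρ)
  rw [gam1]
  linarith

lemma gam2_neg (hσ : σ ≠ 0) (hρ : 0 < ρ) : gam2 μ σ ρ < 0 := by
  have := Real.lt_sqrt_of_sq_lt (x := -(μ / σ ^ 2))
    (by rw [neg_sq]; exact sq_div_lt_discriminant hσ hρ)
  rw [gam2]
  linarith

lemma gam1_add_gam2 : gam1 μ σ ρ + gam2 μ σ ρ = -(2 * μ / σ ^ 2) := by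
  rw [gam1, gam2]
  ring

lemma gam1_mul_gam2 (hσ : σ ≠ 0) (hρ : 0 ≤ ρ) : gam1 μ σ ρ * gam2 μ σ ρ = -(2 * ρ / σ ^ 2) := by
  have hsq := Real.sq_sqrt (x := μ ^ 2 / σ ^ 4 + 2 * ρ / σ ^ 2) (by positivity)
  rw [gam1, gam2]
  field_simp at hsq ⊢
  linear_combination -hsq

lemma gam1_sq_mul_exp_bstar (hσ : σ ≠ 0) (hρ : 0 < ρ) :
    gam1 μ σ ρ ^ 2 * Real.exp (gam1 μ σ ρ * bstar μ σ ρ) =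
      gam2 μ σ ρ ^ 2 * Real.exp (gam2 μ σ ρ * bstar μ σ ρ) := by
  have h1 := gam1_pos (μ := μ) hσ hρ
  have h2 := gam2_neg (μ := μ) hσ hρ
  have hexp : Real.exp ((gam1 μ σ ρ - gam2 μ σ ρ) * bstar μ σ ρ) =
      gam2 μ σ ρ ^ 2 / gam1 μ σ ρ ^ 2 := by
    rw [bstar, mul_div_cancel₀ _ (by linarith)]
    exact Real.exp_log (div_pos (pow_pos (neg_pos.2 h2) 2 |>.trans_eq (neg_sq _)) (pow_pos h1 2))
  rw [sub_mul, Real.exp_sub, div_eq_div_iff (Real.exp_pos _).ne' (pow_pos h1 2).ne'] at hexp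
  linarith

lemma Vfun_bstar_eq (hσ : σ ≠ 0) (hρ : 0 < ρ) :
    (Real.exp (gam1 μ σ ρ * bstar μ σ ρ) - Real.exp (gam2 μ σ ρ * bstar μ σ ρ)) /
      (gam1 μ σ ρ * Real.exp (gam1 μ σ ρ * bstar μ σ ρ) -
        gam2 μ σ ρ * Real.exp (gam2 μ σ ρ * bstar μ σ ρ)) = μ / ρ := by
  have hden : 0 < gam1 μ σ ρ * Real.exp (gam1 μ σ ρ * bstar μ σ ρ) -
      gam2 μ σ ρ * Real.exp (gam2 μ σ ρ * bstar μ σ ρ) := by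
    have := mul_pos (gam1_pos (μ := μ) hσ hρ) (Real.exp_pos (gam1 μ σ ρ * bstar μ σ ρ))
    have := mul_neg_of_neg_of_pos (gam2_neg (μ := μ) hσ hρ)
      (Real.exp_pos (gam2 μ σ ρ * bstar μ σ ρ))
    linarith
  have hμ : μ = -(σ ^ 2 / 2) * (gam1 μ σ ρ + gam2 μ σ ρ) := by
    rw [gam1_add_gam2]; field_simp
  have hρ' : ρ = -(σ ^ 2 / 2) * (gam1 μ σ ρ * gam2 μ σ ρ) := by
    rw [gam1_mul_gam2 hσ hρ.le]; field_simp
  rw [div_eq_div_iff hden.ne' hρ.ne']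
  linear_combination
    (Real.exp (gam1 μ σ ρ * bstar μ σ ρ) - Real.exp (gam2 μ σ ρ * bstar μ σ ρ)) * hρ' -
      (gam1 μ σ ρ * Real.exp (gam1 μ σ ρ * bstar μ σ ρ) -
        gam2 μ σ ρ * Real.exp (gam2 μ σ ρ * bstar μ σ ρ)) * hμ +
      (σ ^ 2 / 2) * gam1_sq_mul_exp_bstar hσ hρ

lemma Vfun_of_bstar_le (hσ : σ ≠ 0) (hρ : 0 < ρ) {x : ℝ} (hx : bstar μ σ ρ ≤ x) :
    Vfun μ σ ρ x = μ / ρ + x - bstar μ σ ρ := by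
  rw [Vfun, if_neg hx.not_gt, Vfun_bstar_eq hσ hρ]

end ValueFunction

lemma sub_mul_Vfun_nonpos_iff {μ σ r q x : ℝ} (hσ : σ ≠ 0) (hr : 0 < r) (hq : 0 < q)
    (hx : bstar μ σ (r + q) ≤ x) :
    μ - r * Vfun μ σ (r + q) x ≤ 0 ↔ yUpper μ σ r q ≤ x := by
  rw [sub_nonpos, ← div_le_iff₀' hr, Vfun_of_bstar_le hσ (by linarith) hx, yUpper]
  constructor <;> intro h <;> linarith

theorem stmt5_general (μ σ r q : ℝ) (hσ : 0 < σ) (hr : 0 < r) (hq : 0 < q)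
    (y : ℝ) (hy : bstar μ σ (r+q) ≤ y) :
    (yUpper μ σ r q ≤ y ↔
      ((∀ x ∈ Set.Ioo (bstar μ σ (r+q)) y, μ - (r+q) * Vfun μ σ (r+q) x ≤ 0) ∧
       (∀ x, y ≤ x → μ - r * Vfun μ σ (r+q) x ≤ 0))) ∧
    (y < yUpper μ σ r q →
      (μ - r * Vfun μ σ (r+q) y = μ - r * (y - bstar μ σ (r+q) + μ/(r+q)) ∧
       0 < μ - r * Vfun μ σ (r+q) y)) := by
  have hρ : 0 < r + q := by linarith
  have hV : ∀ {x}, bstar μ σ (r+q) ≤ x → Vfun μ σ (r+q) x = μ/(r+q) + x - bstar μ σ (r+q) :=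
    Vfun_of_bstar_le hσ.ne' hρ
  have hiff : ∀ {x}, bstar μ σ (r+q) ≤ x → (μ - r * Vfun μ σ (r+q) x ≤ 0 ↔ yUpper μ σ r q ≤ x) :=
    sub_mul_Vfun_nonpos_iff hσ.ne' hr hq
  refine ⟨⟨fun hyu => ⟨fun x hx => ?_, fun x hx => (hiff (hy.trans hx)).2 (hyu.trans hx)⟩,
    fun h => (hiff hy).1 (h.2 y le_rfl)⟩, fun hlt => ⟨by rw [hV hy]; ring, ?_⟩⟩
  · have hμ : μ - (r + q) * Vfun μ σ (r + q) x = -((r + q) * (x - bstar μ σ (r + q))) := by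
      rw [hV hx.1.le]; field_simp; ring
    rw [hμ, neg_nonpos]
    exact mul_nonneg hρ.le (sub_nonneg.2 hx.1.le)
  · exact lt_of_not_ge fun h => hlt.not_ge ((hiff hy).1 h)

/-- for `y ≥ b*_{r+q}`, `y ≥ y_u` iff
`μ − (r+q)V_{r+q} ≤ 0` on `(b*_{r+q},y)` and `μ − rV_{r+q} ≤ 0` on `[y,∞)`;
and if `y < y_u` then `μ − rV_{r+q}(y) = μ − r(y − b*_{r+q} + μ/(r+q)) > 0`. -/
theorem stmt5 (μ σ r q : ℝ) (hμ : 0 < μ) (hσ : 0 < σ) (hr : 0 < r) (hq : 0 < q)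
    (y : ℝ) (hy : bstar μ σ (r+q) ≤ y) :
    (yUpper μ σ r q ≤ y ↔
      ((∀ x ∈ Set.Ioo (bstar μ σ (r+q)) y, μ - (r+q) * Vfun μ σ (r+q) x ≤ 0) ∧
       (∀ x, y ≤ x → μ - r * Vfun μ σ (r+q) x ≤ 0))) ∧
    (y < yUpper μ σ r q →
      (μ - r * Vfun μ σ (r+q) y = μ - r * (y - bstar μ σ (r+q) + μ/(r+q)) ∧
       0 < μ - r * Vfun μ σ (r+q) y)) :=
  stmt5_general μ σ r q hσ hr hq y hy
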